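/- Let v₁ = (1,0,0), v₂ = (0,1,0), v₃ = (1,−3,5), v₄ = (−2,2,−5) in ℤ³, and let f : ℤ³ → ℤ⁴ be the additive group homomorphism sending t ∈ ℤ³ to (⟨t,v₁⟩, ⟨t,v₂⟩, ⟨t,v₃⟩, ⟨t,v₄⟩), where ⟨·,·⟩ denotes the standard dot product on ℤ³. Then the cokernel ℤ⁴ / f(ℤ³) is isomorphic, as an abelian group, to ℤ ⊕ ℤ/5ℤ. -/

import Mathlib

/-!
The relations `v₁ + v₂ + v₃ + v₄ = 0` and `-v₁ + 3v₂ + v₃ = 5e₃` among the rays give a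
homomorphism `x ↦ (∑ xᵢ, -x₁ + 3x₂ + x₃ mod 5)` from `ℤ⁴` onto `ℤ × ℤ/5` that kills the image
of `t ↦ (⟨t,vᵢ⟩)ᵢ`. Conversely, any `x` in its kernel is the image of `t = (x₁, x₂, k)`, where
`5k = -x₁ + 3x₂ + x₃`, so the cokernel is `ℤ × ℤ/5`.
-/

def rayRelationMap : (Fin 4 → ℤ) →+ ℤ × ZMod 5 where
  toFun x := (x 0 + x 1 + x 2 + x 3, ((-x 0 + 3 * x 1 + x 2 : ℤ) : ZMod 5))
  map_zero' := by simp
  map_add' x y := by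
    simp only [Pi.add_apply, Prod.mk_add_mk, Prod.mk.injEq]
    push_cast
    constructor <;> ring

lemma rayRelationMap_apply (x : Fin 4 → ℤ) :
    rayRelationMap x = (x 0 + x 1 + x 2 + x 3, ((-x 0 + 3 * x 1 + x 2 : ℤ) : ZMod 5)) :=
  rfl

lemma rayRelationMap_surjective : Function.Surjective rayRelationMap := by
  rintro ⟨m, c⟩
  refine ⟨![0, 0, (c.val : ℤ), m - c.val], ?_⟩
  simp [rayRelationMap_apply]

lemma pairing_rays_eq {v : Fin 4 → Fin 3 → ℤ}
    (hv : v = ![![1, 0, 0], ![0, 1, 0], ![1, -3, 5], ![-2, 2, -5]]) (t : Fin 3 → ℤ) :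
    (fun i ↦ ∑ m, t m * v i m) =
      ![t 0, t 1, t 0 - 3 * t 1 + 5 * t 2, -2 * t 0 + 2 * t 1 - 5 * t 2] := by
  subst hv
  funext i
  fin_cases i <;> simp [Fin.sum_univ_succ] <;> ring

lemma range_eq_ker_rayRelationMap {v : Fin 4 → Fin 3 → ℤ}
    (hv : v = ![![1, 0, 0], ![0, 1, 0], ![1, -3, 5], ![-2, 2, -5]])
    {f : (Fin 3 → ℤ) →+ (Fin 4 → ℤ)} (hf : ∀ t i, f t i = ∑ m, t m * v i m) :
    f.range = rayRelationMap.ker := by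
  have hf' (t : Fin 3 → ℤ) : f t = _ := (funext (hf t)).trans (pairing_rays_eq hv t)
  ext x
  simp only [AddMonoidHom.mem_range, AddMonoidHom.mem_ker, rayRelationMap_apply,
    Prod.mk_eq_zero, ZMod.intCast_zmod_eq_zero_iff_dvd]
  constructor
  · rintro ⟨t, rfl⟩
    simp only [hf', Matrix.cons_val]
    exact ⟨by ring, ⟨t 2, by ring⟩⟩
  · rintro ⟨hsum, k, hk⟩
    refine ⟨![x 0, x 1, k], ?_⟩
    rw [hf']
    funext i
    fin_cases i <;> simp <;> omega

/-- The cokernel of the map `ℤ³ → ℤ⁴`, `t ↦ (⟨t,v₁⟩, ⟨t,v₂⟩, ⟨t,v₃⟩, ⟨t,v₄⟩)` for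
`v₁ = (1,0,0)`, `v₂ = (0,1,0)`, `v₃ = (1,−3,5)`, `v₄ = (−2,2,−5)`
is isomorphic to `ℤ ⊕ ℤ/5ℤ`. -/
theorem stmt_2
    (v : Fin 4 → Fin 3 → ℤ)
    (hv : v = ![![1, 0, 0], ![0, 1, 0], ![1, -3, 5], ![-2, 2, -5]])
    (f : (Fin 3 → ℤ) →+ (Fin 4 → ℤ))
    (hf : ∀ (t : Fin 3 → ℤ) (i : Fin 4), f t i = ∑ m, t m * v i m) :
    Nonempty (((Fin 4 → ℤ) ⧸ f.range) ≃+ (ℤ × ZMod 5)) :=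
  ⟨(QuotientAddGroup.quotientAddEquivOfEq (range_eq_ker_rayRelationMap hv hf)).trans
    (QuotientAddGroup.quotientKerEquivOfSurjective _ rayRelationMap_surjective)⟩
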